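/- Suppose m = n and G₀ ∈ ℝ^{n×n} is invertible, so that σ = ‖G₀⁻¹‖⁻¹ (operator norm). Let x ∈ ℝⁿ satisfy (L_f + L_G)·‖x‖ ≤ σ, and for a unit vector d ∈ ℝⁿ define K(d) = (σ − L_G‖x‖ − L_f‖x‖) / (‖G₀⁻¹d‖·(σ − L_G‖x‖) + ‖G₀⁻¹‖·L_G‖x‖). Then for every unit vector d ∈ ℝⁿ, ‖G₀⁻¹d‖·(σ − L_G‖x‖) + ‖G₀⁻¹‖·L_G‖x‖ ≤ 1, and hence σ − (L_f + L_G)‖x‖ ≤ K(d); consequently, the closed ball B(f₀; σ − (L_f + L_G)‖x‖) is contained in the set {f₀ + k·d : d ∈ ℝⁿ, ‖d‖ = 1, 0 ≤ k ≤ K(d)}. -/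

import Mathlib

/-!
For a unit vector `d` write `a = ‖G₀⁻¹ d‖`, `N = ‖G₀⁻¹‖ = σ⁻¹` and `s = L_G ‖x‖ ∈ [0, σ]`.
Since `0 < a ≤ N`, the denominator `a (σ - s) + N s` of `K(d)` lies between `a σ > 0` and
`N σ = 1`, and dividing the nonnegative numerator by a number in `(0, 1]` can only increase it.
So every `K(d)` is at least the radius `r = σ - (L_f + L_G) ‖x‖`, and every point of the closed
ball `B(f₀; r)` is `f₀ + k d` with `d` the normalized direction from `f₀` and `k ≤ r ≤ K(d)`.
-/

open Matrix Set

noncomputable def matOpNorm {n m : ℕ} (M : Matrix (Fin n) (Fin m) ℝ) : ℝ :=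
  ‖LinearMap.toContinuousLinearMap (Matrix.toEuclideanLin M)‖

noncomputable def appMat {n m : ℕ} (M : Matrix (Fin n) (Fin m) ℝ)
    (v : EuclideanSpace ℝ (Fin m)) : EuclideanSpace ℝ (Fin n) :=
  Matrix.toEuclideanLin M v

noncomputable def colSpace {n m : ℕ} (M : Matrix (Fin n) (Fin m) ℝ) :
    Submodule ℝ (EuclideanSpace ℝ (Fin n)) :=
  LinearMap.range (Matrix.toEuclideanLin M)

noncomputable def minSV {n m : ℕ} (M : Matrix (Fin n) (Fin m) ℝ) : ℝ :=
  Real.sqrt (sInf {μ : ℝ | μ ≠ 0 ∧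
    ∃ i, (show (Mᵀ * M).IsHermitian by
      simpa only [Matrix.conjTranspose_eq_transpose_of_trivial] using
        Matrix.isHermitian_conjTranspose_mul_self M).eigenvalues i = μ})

open Metric NormedSpace

section StarRegion

variable {E : Type*} [NormedAddCommGroup E] [NormedSpace ℝ E]

def starRegion (c : E) (K : E → ℝ) : Set E :=
  {v | ∃ (d : E) (k : ℝ), ‖d‖ = 1 ∧ 0 ≤ k ∧ k ≤ K d ∧ v = c + k • d}

theorem closedBall_subset_starRegion [Nontrivial E] {c : E} {r : ℝ} {K : E → ℝ}
    (hK : ∀ d, ‖d‖ = 1 → r ≤ K d) : closedBall c r ⊆ starRegion c K := by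
  intro v hv
  rw [mem_closedBall, dist_eq_norm] at hv
  by_cases hvc : v = c
  · obtain ⟨d, hd⟩ := exists_norm_eq E zero_le_one
    have hr : 0 ≤ r := (norm_nonneg _).trans hv
    exact ⟨d, 0, hd, le_rfl, hr.trans (hK d hd), by simp [hvc]⟩
  · have hd : ‖normalize (v - c)‖ = 1 := norm_normalize (sub_ne_zero.2 hvc)
    refine ⟨normalize (v - c), ‖v - c‖, hd, norm_nonneg _, hv.trans (hK _ hd), ?_⟩
    rw [norm_smul_normalize, add_sub_cancel]

end StarRegion

theorem denom_pos_and_le_one {a N σ s : ℝ} (ha : 0 < a) (haN : a ≤ N) (hσN : σ * N = 1)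
    (hs : 0 ≤ s) (hsσ : s ≤ σ) : 0 < a * (σ - s) + N * s ∧ a * (σ - s) + N * s ≤ 1 := by
  have hσ : 0 < σ := pos_of_mul_pos_left (hσN ▸ one_pos) (ha.le.trans haN)
  constructor
  · calc 0 < a * σ := mul_pos ha hσ
      _ = a * (σ - s) + a * s := by ring
      _ ≤ a * (σ - s) + N * s := by gcongr
  · calc a * (σ - s) + N * s ≤ N * (σ - s) + N * s := by gcongr
      _ = σ * N := by ring
      _ = 1 := hσN

theorem norm_appMat_le_matOpNorm {n m : ℕ} (M : Matrix (Fin n) (Fin m) ℝ)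
    (v : EuclideanSpace ℝ (Fin m)) : ‖appMat M v‖ ≤ matOpNorm M * ‖v‖ :=
  (LinearMap.toContinuousLinearMap (Matrix.toEuclideanLin M)).le_opNorm v

theorem appMat_appMat_inv {n : ℕ} {G : Matrix (Fin n) (Fin n) ℝ} (hG : IsUnit G)
    (v : EuclideanSpace ℝ (Fin n)) : appMat G (appMat G⁻¹ v) = v := by
  simp only [appMat, Matrix.toLpLin_apply]
  rw [Matrix.mulVec_mulVec, Matrix.mul_nonsing_inv _ ((Matrix.isUnit_iff_isUnit_det _).mp hG),
    Matrix.one_mulVec, WithLp.toLp_ofLp]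

theorem appMat_inv_ne_zero {n : ℕ} {G : Matrix (Fin n) (Fin n) ℝ} (hG : IsUnit G)
    {v : EuclideanSpace ℝ (Fin n)} (hv : v ≠ 0) : appMat G⁻¹ v ≠ 0 := by
  intro h
  apply hv
  rw [← appMat_appMat_inv hG v, h, appMat, map_zero]

/-- **Corollary 2.** For invertible `G₀` (so `σ = ‖G₀⁻¹‖⁻¹`), for every
unit vector `d` the denominator of `K(d)` is at most `1`, hence
`σ − (L_f + L_G)‖x‖ ≤ K(d)`; consequently the closed ball
`B(f₀; σ − (L_f + L_G)‖x‖)` is contained in `{f₀ + k • d : ‖d‖ = 1, 0 ≤ k ≤ K(d)}`. -/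
theorem corollary2_ball_in_polytope {n : ℕ} (hn : 0 < n) (Lf LG : ℝ)
    (hLf : 0 < Lf) (hLG : 0 < LG)
    (f₀ : EuclideanSpace ℝ (Fin n))
    (G₀ : Matrix (Fin n) (Fin n) ℝ) (hG₀ : IsUnit G₀)
    (σ : ℝ) (hσ : σ = (matOpNorm G₀⁻¹)⁻¹)
    (x : EuclideanSpace ℝ (Fin n)) (hx : (Lf + LG) * ‖x‖ ≤ σ)
    (K : EuclideanSpace ℝ (Fin n) → ℝ)
    (hK : ∀ d, K d = (σ - LG * ‖x‖ - Lf * ‖x‖) /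
      (‖appMat G₀⁻¹ d‖ * (σ - LG * ‖x‖) + matOpNorm G₀⁻¹ * (LG * ‖x‖))) :
    (∀ d : EuclideanSpace ℝ (Fin n), ‖d‖ = 1 →
      ‖appMat G₀⁻¹ d‖ * (σ - LG * ‖x‖) + matOpNorm G₀⁻¹ * (LG * ‖x‖) ≤ 1 ∧
      σ - (Lf + LG) * ‖x‖ ≤ K d) ∧
    Metric.closedBall f₀ (σ - (Lf + LG) * ‖x‖) ⊆
      {v | ∃ (d : EuclideanSpace ℝ (Fin n)) (k : ℝ),
        ‖d‖ = 1 ∧ 0 ≤ k ∧ k ≤ K d ∧ v = f₀ + k • d} := by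
  have hLfx : 0 ≤ Lf * ‖x‖ := by positivity
  have hs : 0 ≤ LG * ‖x‖ := by positivity
  have unit_bounds : ∀ d : EuclideanSpace ℝ (Fin n), ‖d‖ = 1 →
      ‖appMat G₀⁻¹ d‖ * (σ - LG * ‖x‖) + matOpNorm G₀⁻¹ * (LG * ‖x‖) ≤ 1 ∧
      σ - (Lf + LG) * ‖x‖ ≤ K d := by
    intro d hd
    have ha : 0 < ‖appMat G₀⁻¹ d‖ :=
      norm_pos_iff.2 (appMat_inv_ne_zero hG₀ (norm_ne_zero_iff.1 (by simp [hd])))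
    have haN : ‖appMat G₀⁻¹ d‖ ≤ matOpNorm G₀⁻¹ := by
      simpa [hd] using norm_appMat_le_matOpNorm G₀⁻¹ d
    have hσN : σ * matOpNorm G₀⁻¹ = 1 := hσ ▸ inv_mul_cancel₀ (ha.trans_le haN).ne'
    obtain ⟨hpos, hle⟩ := denom_pos_and_le_one ha haN hσN hs (by linarith)
    refine ⟨hle, ?_⟩
    rw [hK, show σ - (Lf + LG) * ‖x‖ = σ - LG * ‖x‖ - Lf * ‖x‖ by ring]
    exact le_div_self (by linarith) hpos hle
  have : Nonempty (Fin n) := ⟨⟨0, hn⟩⟩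
  exact ⟨unit_bounds, closedBall_subset_starRegion fun d hd => (unit_bounds d hd).2⟩
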